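/- arXiv:1711.00070 — 2 statements merged into one kernel-verified Lean document; each statement's English description precedes it below -/
import Mathlib

section
/- Under the Lipschitz condition Σ_{i<j}|p_{i,j}(x) - p_{i,j}(x')| ≤ M‖x-x'‖ and the noise condition H = inf_x min_{i<j} |p_{i,j}(x) - 1/2| > 0 with all P_x and all P_C (C in the partition P) strictly stochastically transitive, the piecewise-constant rule s*_P given by local Kemeny medians satisfies sup_x d_τ(σ*_{P_x}, s*_P(x)) ≤ (M/H) δ_P, where δ_P is the maximal cell diameter. -/
open Finset

/-- The set of ordered pairs (i,j) with i < j. -/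
def pairs (n : ℕ) : Finset (Fin n × Fin n) :=
  Finset.univ.filter fun p => p.1 < p.2

/-- Kendall tau distance between two permutations. -/
noncomputable def dtau {n : ℕ} (σ σ' : Equiv.Perm (Fin n)) : ℝ :=
  ∑ p ∈ pairs n,
    if (((σ p.1 : ℕ) : ℤ) - ((σ p.2 : ℕ) : ℤ)) * (((σ' p.1 : ℕ) : ℤ) - ((σ' p.2 : ℕ) : ℤ)) < 0
    then 1 else 0

/-- Expected Kendall tau distance L_P(σ) = E_{Σ∼P}[d_τ(Σ,σ)]. -/
noncomputable def L {n : ℕ} (P : Equiv.Perm (Fin n) → ℝ) (σ : Equiv.Perm (Fin n)) : ℝ :=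
  ∑ τ : Equiv.Perm (Fin n), P τ * dtau τ σ

/-- Pairwise probability p_{i,j} = P{Σ(i) < Σ(j)}. -/
noncomputable def pp {n : ℕ} (P : Equiv.Perm (Fin n) → ℝ) (i j : Fin n) : ℝ :=
  ∑ τ : Equiv.Perm (Fin n), P τ * (if τ i < τ j then 1 else 0)

/-- P is a probability distribution on S_n. -/
def IsProb {n : ℕ} (P : Equiv.Perm (Fin n) → ℝ) : Prop :=
  (∀ τ, 0 ≤ P τ) ∧ ∑ τ : Equiv.Perm (Fin n), P τ = 1

/-- σ is a Kemeny median of P. -/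
def IsMedian {n : ℕ} (P : Equiv.Perm (Fin n) → ℝ) (σ : Equiv.Perm (Fin n)) : Prop :=
  ∀ τ, L P σ ≤ L P τ

/-- L*_P = min_σ L_P(σ). -/
noncomputable def Lstar {n : ℕ} (P : Equiv.Perm (Fin n) → ℝ) : ℝ :=
  ⨅ σ : Equiv.Perm (Fin n), L P σ

/-- Stochastic transitivity. -/
def StochTrans {n : ℕ} (P : Equiv.Perm (Fin n) → ℝ) : Prop :=
  ∀ i j k : Fin n, 1/2 ≤ pp P i j → 1/2 ≤ pp P j k → 1/2 ≤ pp P i k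

/-- Strict stochastic transitivity. -/
def StrictStochTrans {n : ℕ} (P : Equiv.Perm (Fin n) → ℝ) : Prop :=
  StochTrans P ∧ ∀ i j : Fin n, i < j → pp P i j ≠ 1/2

open MeasureTheory

instance {n : ℕ} : MeasurableSpace (Equiv.Perm (Fin n)) := ⊤

/-- Risk of a ranking rule s: R(s) = E_{X∼μ}[L_{P_X}(s(X))]. -/
noncomputable def Risk {n : ℕ} {X : Type*} [MeasurableSpace X] (μ : Measure X)
    (P : X → Equiv.Perm (Fin n) → ℝ) (s : X → Equiv.Perm (Fin n)) : ℝ :=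
  ∫ x, L (P x) (s x) ∂μ

/-- Minimum risk over all measurable ranking rules. -/
noncomputable def RiskStar {n : ℕ} {X : Type*} [MeasurableSpace X] (μ : Measure X)
    (P : X → Equiv.Perm (Fin n) → ℝ) : ℝ :=
  sInf {r | ∃ s : X → Equiv.Perm (Fin n), Measurable s ∧ r = Risk μ P s}

/-- Conditional law of Σ given X ∈ C. -/
noncomputable def condP {n : ℕ} {X : Type*} [MeasurableSpace X] (μ : Measure X)
    (P : X → Equiv.Perm (Fin n) → ℝ) (C : Set X) (τ : Equiv.Perm (Fin n)) : ℝ :=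
  (∫ x in C, P x τ ∂μ) / (μ C).toReal

/-!
A Kemeny median of a strictly stochastically transitive law orders each pair `i < j` according
to the side of `1/2` on which `p_{i,j}` lies. Hence if the medians at `x` and on the cell `C ∋ x`
disagree on a pair, then `p_{i,j}(x)` and `p_{i,j}(C)` lie on opposite sides of `1/2`, and the
noise condition makes them at least `H` apart. Summing over discordant pairs gives
`H · d_τ ≤ Σ_{i<j} |p_{i,j}(x) - p_{i,j}(C)|`, and since `p_{i,j}(C)` is the average of
`p_{i,j}` over `C`, the Lipschitz condition bounds the right-hand side by `M δ_P`.
-/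

/-- The permutation ranks each element by the number of elements below it. -/
theorem Fin.exists_perm_lt_iff {n : ℕ} (r : Fin n → Fin n → Prop) (irrefl : ∀ a, ¬ r a a)
    (trans : ∀ a b c, r a b → r b c → r a c) (total : ∀ a b, a ≠ b → r a b ∨ r b a) :
    ∃ σ : Equiv.Perm (Fin n), ∀ a b, σ a < σ b ↔ r a b := by
  classical
  let rank : Fin n → ℕ := fun a => #{b | r b a}
  have rank_lt_of_rel : ∀ a b, r a b → rank a < rank b := fun a b hab =>
    card_lt_card <| (ssubset_iff_of_subset fun c hc => by simp_all [trans c a b]).2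
      ⟨a, by simpa using hab, by simpa using irrefl a⟩
  have rank_lt_n : ∀ a, rank a < n := fun a =>
    calc rank a ≤ #(univ.erase a) :=
          card_le_card fun c hc => mem_erase.2 ⟨by rintro rfl; simp_all, mem_univ c⟩
      _ < n := by simpa using a.pos
  have rank_lt_iff : ∀ a b, rank a < rank b ↔ r a b := fun a b => by
    refine ⟨fun h => ?_, rank_lt_of_rel a b⟩
    rcases eq_or_ne a b with rfl | hab
    · exact absurd h (lt_irrefl _)
    · exact (total a b hab).resolve_right fun hba => (rank_lt_of_rel b a hba).not_gt h
  have rank_inj : Function.Injective fun a => (⟨rank a, rank_lt_n a⟩ : Fin n) :=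
    fun a b h => by_contra fun hab => (total a b hab).elim
      (fun h' => (rank_lt_of_rel a b h').ne (congrArg Fin.val h))
      (fun h' => (rank_lt_of_rel b a h').ne' (congrArg Fin.val h))
  exact ⟨Equiv.ofBijective _ (Finite.injective_iff_bijective.1 rank_inj),
    fun a b => rank_lt_iff a b⟩

theorem abs_sub_le_abs_sub_of_not_lt_iff_lt {α : Type*} [AddCommGroup α] [LinearOrder α]
    [IsOrderedAddMonoid α] {a b c : α} (h : ¬ (c < a ↔ c < b)) : |a - c| ≤ |a - b| := by
  rcases lt_or_ge c a with hca | hac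
  · have hbc : b ≤ c := not_lt.1 fun hcb => h (iff_of_true hca hcb)
    rw [abs_of_pos (sub_pos.2 hca), abs_of_pos (sub_pos.2 (hbc.trans_lt hca))]
    exact sub_le_sub_left hbc a
  · have hcb : c < b := not_not.1 fun hbc => h (iff_of_false hac.not_gt hbc)
    rw [abs_sub_comm, abs_of_nonneg (sub_nonneg.2 hac), abs_sub_comm,
      abs_of_pos (sub_pos.2 (hac.trans_lt hcb))]
    exact sub_le_sub_right hcb.le a

section Pairwise

variable {n : ℕ} {P : Equiv.Perm (Fin n) → ℝ}

theorem dtau_summand_neg_iff (σ τ : Equiv.Perm (Fin n)) {i j : Fin n} (hij : i ≠ j) :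
    (((σ i : ℕ) : ℤ) - ((σ j : ℕ) : ℤ)) * (((τ i : ℕ) : ℤ) - ((τ j : ℕ) : ℤ)) < 0 ↔
      ¬ (σ i < σ j ↔ τ i < τ j) := by
  have hσ : (σ i : ℕ) ≠ σ j := Fin.val_injective.ne (σ.injective.ne hij)
  have hτ : (τ i : ℕ) ≠ τ j := Fin.val_injective.ne (τ.injective.ne hij)
  rw [mul_neg_iff, Fin.lt_def, Fin.lt_def]
  omega

theorem pp_self (P : Equiv.Perm (Fin n) → ℝ) (i : Fin n) : pp P i i = 0 := by
  simp [pp]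

theorem pp_add_pp_swap (hP : IsProb P) {i j : Fin n} (hij : i ≠ j) :
    pp P i j + pp P j i = 1 := by
  rw [pp, pp, ← sum_add_distrib]
  refine (sum_congr rfl fun τ _ => ?_).trans hP.2
  rcases lt_or_gt_of_ne (τ.injective.ne hij) with h | h <;>
    simp [h, h.not_gt]

theorem L_eq_sum_pairs (P : Equiv.Perm (Fin n) → ℝ) (σ : Equiv.Perm (Fin n)) :
    L P σ = ∑ p ∈ pairs n, if σ p.1 < σ p.2 then pp P p.2 p.1 else pp P p.1 p.2 := by
  simp only [L, dtau, mul_sum]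
  rw [sum_comm]
  refine sum_congr rfl fun ⟨i, j⟩ hp => ?_
  have hij : i ≠ j := (mem_filter.1 hp).2.ne
  simp only [dtau_summand_neg_iff _ σ hij, pp]
  split_ifs with hσ
  · refine sum_congr rfl fun τ _ => ?_
    rcases lt_or_gt_of_ne (τ.injective.ne hij) with h | h <;> simp [hσ, h, h.not_gt]
  · simp [hσ]

theorem StrictStochTrans.pp_ne_half (hP : IsProb P) (hT : StrictStochTrans P) {i j : Fin n}
    (hij : i ≠ j) : pp P i j ≠ 1 / 2 := by
  rcases lt_or_gt_of_ne hij with h | h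
  · exact hT.2 i j h
  · intro hi
    exact hT.2 j i h (by linarith [pp_add_pp_swap hP hij])

theorem StrictStochTrans.exists_perm_lt_iff (hP : IsProb P) (hT : StrictStochTrans P) :
    ∃ σ : Equiv.Perm (Fin n), ∀ a b, σ a < σ b ↔ 1 / 2 < pp P a b := by
  refine Fin.exists_perm_lt_iff _ (fun a => by norm_num [pp_self]) (fun a b c hab hbc => ?_)
    (fun a b hab => ?_)
  · have hac : a ≠ c := by
      rintro rfl
      linarith [pp_add_pp_swap hP (show a ≠ b by rintro rfl; norm_num [pp_self] at hab)]
    exact (hT.1 a b c hab.le hbc.le).lt_of_ne' (hT.pp_ne_half hP hac)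
  · rcases (hT.pp_ne_half hP hab).lt_or_gt with h | h
    · exact Or.inr (by linarith [pp_add_pp_swap hP hab])
    · exact Or.inl h

theorem IsMedian.lt_iff_half_lt_pp (hP : IsProb P) (hT : StrictStochTrans P)
    {σ : Equiv.Perm (Fin n)} (hσ : IsMedian P σ) {i j : Fin n} (hij : i < j) :
    σ i < σ j ↔ 1 / 2 < pp P i j := by
  obtain ⟨σ₀, hσ₀⟩ := hT.exists_perm_lt_iff hP
  -- `σ₀` pays `min (p_{i,j}) (p_{j,i})` on every pair, strictly less than any other choice.
  have cost_le : ∀ (s : Equiv.Perm (Fin n)), ∀ p ∈ pairs n,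
      (if σ₀ p.1 < σ₀ p.2 then pp P p.2 p.1 else pp P p.1 p.2) ≤
        if s p.1 < s p.2 then pp P p.2 p.1 else pp P p.1 p.2 := fun s p hp => by
    have hsum := pp_add_pp_swap hP (mem_filter.1 hp).2.ne
    simp only [hσ₀]
    split_ifs <;> linarith
  by_contra hc
  have cost_lt : (if σ₀ i < σ₀ j then pp P j i else pp P i j) <
      if σ i < σ j then pp P j i else pp P i j := by
    have hsum := pp_add_pp_swap hP hij.ne
    simp only [hσ₀]
    rcases (hT.pp_ne_half hP hij.ne).lt_or_gt with h | h <;>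
      split_ifs <;> first | linarith | tauto
  have := sum_lt_sum (cost_le σ) ⟨(i, j), by simp [pairs, hij], cost_lt⟩
  rw [← L_eq_sum_pairs, ← L_eq_sum_pairs] at this
  exact (hσ σ₀).not_gt this

theorem mul_dtau_le_sum_abs_pp_sub {Q : Equiv.Perm (Fin n) → ℝ} (hP : IsProb P) (hQ : IsProb Q)
    (hTP : StrictStochTrans P) (hTQ : StrictStochTrans Q) {σ σ' : Equiv.Perm (Fin n)}
    (hσ : IsMedian P σ) (hσ' : IsMedian Q σ') {H : ℝ}
    (hH : ∀ i j : Fin n, i < j → H ≤ |pp P i j - 1 / 2|) :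
    H * dtau σ σ' ≤ ∑ p ∈ pairs n, |pp P p.1 p.2 - pp Q p.1 p.2| := by
  rw [dtau, mul_sum]
  refine sum_le_sum fun ⟨i, j⟩ hp => ?_
  have hij : i < j := (mem_filter.1 hp).2
  split_ifs with hdisc
  · rw [dtau_summand_neg_iff _ _ hij.ne, hσ.lt_iff_half_lt_pp hP hTP hij,
      hσ'.lt_iff_half_lt_pp hQ hTQ hij] at hdisc
    simpa using (hH i j hij).trans (abs_sub_le_abs_sub_of_not_lt_iff_lt hdisc)
  · simp

end Pairwise

section ConditionalLaw

variable {E : Type*} [MeasurableSpace E] {μ : Measure E} [IsFiniteMeasure μ] {C : Set E}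

theorem sum_abs_sub_setIntegral_div_le {ι : Type*} (s : Finset ι) {f : E → ι → ℝ}
    (hf : ∀ i ∈ s, Integrable (fun x => f x i) (μ.restrict C)) (hC : MeasurableSet C)
    (hCpos : 0 < (μ C).toReal) (v : ι → ℝ) {B : ℝ} (hB : ∀ x ∈ C, ∑ i ∈ s, |v i - f x i| ≤ B) :
    ∑ i ∈ s, |v i - (∫ x in C, f x i ∂μ) / (μ C).toReal| ≤ B := by
  have hg : ∀ i ∈ s, Integrable (fun x => |v i - f x i|) (μ.restrict C) :=
    fun i hi => ((integrable_const _).sub (hf i hi)).abs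
  have hdiff : ∀ i ∈ s, v i - (∫ x in C, f x i ∂μ) / (μ C).toReal =
      (∫ x in C, (v i - f x i) ∂μ) / (μ C).toReal := fun i hi => by
    rw [integral_sub (integrable_const _) (hf i hi), setIntegral_const, smul_eq_mul,
      measureReal_def]
    field_simp
  calc ∑ i ∈ s, |v i - (∫ x in C, f x i ∂μ) / (μ C).toReal|
      = ∑ i ∈ s, |∫ x in C, (v i - f x i) ∂μ| / (μ C).toReal := by
        refine sum_congr rfl fun i hi => ?_
        rw [hdiff i hi, abs_div, abs_of_pos hCpos]
    _ ≤ ∑ i ∈ s, (∫ x in C, |v i - f x i| ∂μ) / (μ C).toReal := by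
        gcongr
        exact abs_integral_le_integral_abs
    _ = (∫ x in C, ∑ i ∈ s, |v i - f x i| ∂μ) / (μ C).toReal := by
        rw [← sum_div, integral_finsetSum _ hg]
    _ ≤ (∫ _ in C, B ∂μ) / (μ C).toReal := div_le_div_of_nonneg_right
        (setIntegral_mono_on (integrable_finsetSum _ hg) (integrable_const _) hC hB) hCpos.le
    _ = B := by
        rw [setIntegral_const, smul_eq_mul, measureReal_def]
        field_simp

variable {n : ℕ} {P : E → Equiv.Perm (Fin n) → ℝ}

theorem integrable_of_isProb (hP : ∀ x, IsProb (P x)) (hmeas : ∀ τ, Measurable fun x => P x τ)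
    (τ : Equiv.Perm (Fin n)) : Integrable (fun x => P x τ) μ := by
  refine (integrable_const (1 : ℝ)).mono' (hmeas τ).aestronglyMeasurable (ae_of_all _ fun x => ?_)
  rw [Real.norm_eq_abs, abs_of_nonneg ((hP x).1 τ), ← (hP x).2]
  exact single_le_sum (fun τ' _ => (hP x).1 τ') (mem_univ τ)

theorem condP_isProb (hP : ∀ x, IsProb (P x)) (hmeas : ∀ τ, Measurable fun x => P x τ)
    (hC : (μ C).toReal ≠ 0) : IsProb (condP μ P C) := by
  refine ⟨fun τ => div_nonneg (integral_nonneg fun x => (hP x).1 τ) ENNReal.toReal_nonneg, ?_⟩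
  unfold condP
  rw [← sum_div, ← integral_finsetSum _ fun τ _ => (integrable_of_isProb hP hmeas τ).restrict]
  simp [(hP _).2, measureReal_def, hC]

theorem pp_condP (hP : ∀ x, IsProb (P x)) (hmeas : ∀ τ, Measurable fun x => P x τ)
    (C : Set E) (i j : Fin n) :
    pp (condP μ P C) i j = (∫ x in C, pp (P x) i j ∂μ) / (μ C).toReal := by
  simp only [pp, condP, div_mul_eq_mul_div, ← sum_div, ← integral_mul_const]
  rw [integral_finsetSum _ fun τ _ => (integrable_of_isProb hP hmeas τ).restrict.mul_const _]

theorem sum_abs_pp_sub_pp_condP_le (hP : ∀ x, IsProb (P x))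
    (hmeas : ∀ τ, Measurable fun x => P x τ) (hC : MeasurableSet C) (hCpos : 0 < (μ C).toReal)
    (x : E) {B : ℝ} (hB : ∀ x' ∈ C, ∑ p ∈ pairs n, |pp (P x) p.1 p.2 - pp (P x') p.1 p.2| ≤ B) :
    ∑ p ∈ pairs n, |pp (P x) p.1 p.2 - pp (condP μ P C) p.1 p.2| ≤ B := by
  have hpp : ∀ p ∈ pairs n, Integrable (fun x => pp (P x) p.1 p.2) (μ.restrict C) :=
    fun p _ => integrable_finsetSum _ fun τ _ =>
      (integrable_of_isProb hP hmeas τ).restrict.mul_const _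
  simp only [pp_condP hP hmeas]
  exact sum_abs_sub_setIntegral_div_le (pairs n) hpp hC hCpos (fun p => pp (P x) p.1 p.2) hB

end ConditionalLaw

theorem stmt_14_general {n : ℕ} {E : Type*} [NormedAddCommGroup E] [MeasurableSpace E]
    (μ : Measure E) [IsProbabilityMeasure μ]
    (P : E → Equiv.Perm (Fin n) → ℝ)
    (hP : ∀ x, IsProb (P x)) (hmeas : ∀ τ, Measurable fun x => P x τ)
    (M : ℝ) (hM : 0 ≤ M)
    (hLip : ∀ x x', ∑ p ∈ pairs n, |pp (P x) p.1 p.2 - pp (P x') p.1 p.2| ≤ M * ‖x - x'‖)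
    (H : ℝ) (hHpos : 0 < H)
    (hH : ∀ x, ∀ i j : Fin n, i < j → H ≤ |pp (P x) i j - 1/2|)
    (hTx : ∀ x, StrictStochTrans (P x))
    (K : ℕ) (C : Fin K → Set E)
    (hC : ∀ k, MeasurableSet (C k))
    (hpos : ∀ k, 0 < (μ (C k)).toReal)
    (hTC : ∀ k, StrictStochTrans (condP μ P (C k)))
    (δ : ℝ) (hδ : ∀ k, ∀ x ∈ C k, ∀ x' ∈ C k, ‖x - x'‖ ≤ δ)
    (σstar : E → Equiv.Perm (Fin n)) (hσstar : ∀ x, IsMedian (P x) (σstar x))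
    (σC : Fin K → Equiv.Perm (Fin n)) (hσC : ∀ k, IsMedian (condP μ P (C k)) (σC k)) :
    ∀ k, ∀ x ∈ C k, dtau (σstar x) (σC k) ≤ (M / H) * δ := by
  intro k x hx
  have hQ := condP_isProb hP hmeas (hpos k).ne'
  have hdist : H * dtau (σstar x) (σC k) ≤ M * δ :=
    (mul_dtau_le_sum_abs_pp_sub (hP x) hQ (hTx x) (hTC k) (hσstar x) (hσC k) (hH x)).trans <|
      sum_abs_pp_sub_pp_condP_le hP hmeas (hC k) (hpos k) x fun x' hx' =>
        (hLip x x').trans (mul_le_mul_of_nonneg_left (hδ k x hx x' hx') hM)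
  rw [div_mul_eq_mul_div, le_div_iff₀ hHpos]
  linarith

theorem stmt_14 {n : ℕ} {E : Type*} [NormedAddCommGroup E] [MeasurableSpace E]
    (μ : Measure E) [IsProbabilityMeasure μ]
    (P : E → Equiv.Perm (Fin n) → ℝ)
    (hP : ∀ x, IsProb (P x)) (hmeas : ∀ τ, Measurable fun x => P x τ)
    (M : ℝ) (hM : 0 ≤ M)
    (hLip : ∀ x x', ∑ p ∈ pairs n, |pp (P x) p.1 p.2 - pp (P x') p.1 p.2| ≤ M * ‖x - x'‖)
    (H : ℝ) (hHpos : 0 < H)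
    (hH : ∀ x, ∀ i j : Fin n, i < j → H ≤ |pp (P x) i j - 1/2|)
    (hTx : ∀ x, StrictStochTrans (P x))
    (K : ℕ) (C : Fin K → Set E)
    (hC : ∀ k, MeasurableSet (C k))
    (hdisj : ∀ k l, k ≠ l → Disjoint (C k) (C l))
    (hcover : (⋃ k, C k) = Set.univ)
    (hpos : ∀ k, 0 < (μ (C k)).toReal)
    (hTC : ∀ k, StrictStochTrans (condP μ P (C k)))
    (δ : ℝ) (hδ : ∀ k, ∀ x ∈ C k, ∀ x' ∈ C k, ‖x - x'‖ ≤ δ)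
    (σstar : E → Equiv.Perm (Fin n)) (hσstar : ∀ x, IsMedian (P x) (σstar x))
    (σC : Fin K → Equiv.Perm (Fin n)) (hσC : ∀ k, IsMedian (condP μ P (C k)) (σC k)) :
    ∀ k, ∀ x ∈ C k, dtau (σstar x) (σC k) ≤ (M / H) * δ :=
  stmt_14_general μ P hP hmeas M hM hLip H hHpos hH hTx K C hC hpos hTC δ hδ σstar hσstar σC hσC
end

section
/- Under strict stochastic transitivity of every P_x with uniform noise margin H > 0, for any ranking rules s_1,...,s_B and any pointwise Kemeny aggregate s̄ (s̄(x) minimizes Σ_b d_τ(σ, s_b(x))), the risk satisfies R(s̄) - R* ≤ (1/(BH)) Σ_{b=1}^B (R(s_b) - R*). -/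
open Finset

open MeasureTheory

section Helpers
variable {n : ℕ}

lemma mem_pairs {p : Fin n × Fin n} (hp : p ∈ pairs n) : p.1 < p.2 :=
  (Finset.mem_filter.mp hp).2

lemma dtau_eq (τ σ : Equiv.Perm (Fin n)) :
    dtau τ σ = ∑ p ∈ pairs n,
      (if ((τ p.1 < τ p.2) ↔ (σ p.1 < σ p.2)) then (0:ℝ) else 1) := by
  unfold dtau
  refine Finset.sum_congr rfl fun p hp => ?_
  have hne : p.1 ≠ p.2 := (mem_pairs hp).ne
  have h1 : (τ p.1 : ℕ) ≠ (τ p.2 : ℕ) := fun h => hne (τ.injective (Fin.val_injective h))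
  have h2 : (σ p.1 : ℕ) ≠ (σ p.2 : ℕ) := fun h => hne (σ.injective (Fin.val_injective h))
  have key : ((((τ p.1:ℕ):ℤ) - ((τ p.2:ℕ):ℤ)) * (((σ p.1:ℕ):ℤ) - ((σ p.2:ℕ):ℤ)) < 0) ↔
      ¬((τ p.1 < τ p.2) ↔ (σ p.1 < σ p.2)) := by
    rw [mul_neg_iff, Fin.lt_def, Fin.lt_def]
    omega
  simp only [key]
  by_cases h : (τ p.1 < τ p.2) ↔ (σ p.1 < σ p.2) <;> simp [h]

lemma dtau_symm (τ σ : Equiv.Perm (Fin n)) : dtau τ σ = dtau σ τ := by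
  rw [dtau_eq, dtau_eq]
  refine Finset.sum_congr rfl fun p _ => ?_
  by_cases h : (τ p.1 < τ p.2) ↔ (σ p.1 < σ p.2)
  · rw [if_pos h, if_pos h.symm]
  · rw [if_neg h, if_neg (fun hh => h hh.symm)]

lemma dtau_triangle (a b c : Equiv.Perm (Fin n)) : dtau a c ≤ dtau a b + dtau b c := by
  rw [dtau_eq, dtau_eq, dtau_eq, ← Finset.sum_add_distrib]
  refine Finset.sum_le_sum fun p _ => ?_
  split_ifs <;> norm_num <;> tauto

lemma dtau_nonneg (τ σ : Equiv.Perm (Fin n)) : 0 ≤ dtau τ σ := by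
  unfold dtau; exact Finset.sum_nonneg fun p _ => by positivity

lemma dtau_le_card (τ σ : Equiv.Perm (Fin n)) : dtau τ σ ≤ ((pairs n).card : ℝ) := by
  unfold dtau
  have : ∀ p ∈ pairs n, (if (((τ p.1 : ℕ) : ℤ) - ((τ p.2 : ℕ) : ℤ)) * (((σ p.1 : ℕ) : ℤ) - ((σ p.2 : ℕ) : ℤ)) < 0 then (1:ℝ) else 0) ≤ 1 := fun p _ => by split_ifs <;> norm_num
  calc _ ≤ ∑ _p ∈ pairs n, (1:ℝ) := Finset.sum_le_sum this
    _ = _ := by simp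

end Helpers
section Helpers2
variable {n : ℕ} {P : Equiv.Perm (Fin n) → ℝ}

lemma pp_compl (hP : IsProb P) {i j : Fin n} (h : i ≠ j) : pp P i j + pp P j i = 1 := by
  unfold pp
  rw [← Finset.sum_add_distrib]
  have hterm : ∀ τ ∈ (Finset.univ : Finset (Equiv.Perm (Fin n))),
      P τ * (if τ i < τ j then (1:ℝ) else 0) + P τ * (if τ j < τ i then (1:ℝ) else 0) = P τ := by
    intro τ _
    have hne : τ i ≠ τ j := fun hh => h (τ.injective hh)
    rcases lt_or_gt_of_ne hne with hlt | hlt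
    · rw [if_pos hlt, if_neg (not_lt_of_gt hlt)]; ring
    · rw [if_neg (not_lt_of_gt hlt), if_pos hlt]; ring
  rw [Finset.sum_congr rfl hterm, hP.2]

lemma pp_nonneg (hP : IsProb P) (i j : Fin n) : 0 ≤ pp P i j :=
  Finset.sum_nonneg fun τ _ => mul_nonneg (hP.1 τ) (by split_ifs <;> norm_num)

lemma pp_le_one (hP : IsProb P) {i j : Fin n} (h : i ≠ j) : pp P i j ≤ 1 := by
  have := pp_compl hP h
  have := pp_nonneg hP j i
  linarith

/-- The per-pair contribution to L. -/
noncomputable def pterm (P : Equiv.Perm (Fin n) → ℝ) (σ : Equiv.Perm (Fin n))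
    (p : Fin n × Fin n) : ℝ :=
  if σ p.1 < σ p.2 then 1 - pp P p.1 p.2 else pp P p.1 p.2

lemma L_eq (hP : IsProb P) (σ : Equiv.Perm (Fin n)) :
    L P σ = ∑ p ∈ pairs n, pterm P σ p := by
  unfold L
  simp only [dtau_eq, Finset.mul_sum]
  rw [Finset.sum_comm]
  refine Finset.sum_congr rfl fun p hp => ?_
  have hne : p.1 ≠ p.2 := (mem_pairs hp).ne
  unfold pterm
  by_cases h : σ p.1 < σ p.2
  · rw [if_pos h]
    have : ∀ τ : Equiv.Perm (Fin n),
        P τ * (if (τ p.1 < τ p.2) ↔ (σ p.1 < σ p.2) then (0:ℝ) else 1)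
        = P τ - P τ * (if τ p.1 < τ p.2 then 1 else 0) := by
      intro τ
      by_cases hτ : τ p.1 < τ p.2
      · rw [if_pos (iff_of_true hτ h), if_pos hτ]; ring
      · rw [if_neg (fun hh => hτ (hh.mpr h)), if_neg hτ]; ring
    rw [Finset.sum_congr rfl fun τ _ => this τ, Finset.sum_sub_distrib, hP.2]
    unfold pp
    exact rfl
  · rw [if_neg h]
    have : ∀ τ : Equiv.Perm (Fin n),
        P τ * (if (τ p.1 < τ p.2) ↔ (σ p.1 < σ p.2) then (0:ℝ) else 1)
        = P τ * (if τ p.1 < τ p.2 then 1 else 0) := by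
      intro τ
      by_cases hτ : τ p.1 < τ p.2
      · rw [if_neg (fun hh => h (hh.mp hτ)), if_pos hτ]
      · rw [if_pos (iff_of_false hτ h), if_neg hτ]
    rw [Finset.sum_congr rfl fun τ _ => this τ]
    unfold pp
    exact rfl

lemma L_nonneg (hP : IsProb P) (σ : Equiv.Perm (Fin n)) : 0 ≤ L P σ :=
  Finset.sum_nonneg fun τ _ => mul_nonneg (hP.1 τ) (dtau_nonneg τ σ)

lemma L_le_card (hP : IsProb P) (σ : Equiv.Perm (Fin n)) : L P σ ≤ ((pairs n).card : ℝ) := by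
  unfold L
  calc ∑ τ : Equiv.Perm (Fin n), P τ * dtau τ σ
      ≤ ∑ τ : Equiv.Perm (Fin n), P τ * ((pairs n).card : ℝ) :=
        Finset.sum_le_sum fun τ _ => mul_le_mul_of_nonneg_left (dtau_le_card τ σ) (hP.1 τ)
    _ = ((pairs n).card : ℝ) := by rw [← Finset.sum_mul, hP.2, one_mul]

end Helpers2
section Median
variable {n : ℕ} {P : Equiv.Perm (Fin n) → ℝ} {σs : Equiv.Perm (Fin n)}

lemma median_adj (hP : IsProb P) (hmed : IsMedian P σs) {a b : Fin n}
    (h : (σs a : ℕ) + 1 = (σs b : ℕ)) : 1/2 ≤ pp P a b := by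
  have hab : a ≠ b := by intro hh; rw [hh] at h; omega
  set τ : Equiv.Perm (Fin n) := σs.trans (Equiv.swap (σs a) (σs b)) with hτ
  have hτa : τ a = σs b := by simp [hτ]
  have hτb : τ b = σs a := by simp [hτ]
  have hτo : ∀ x, x ≠ a → x ≠ b → τ x = σs x := by
    intro x hxa hxb
    simp only [hτ, Equiv.trans_apply]
    exact Equiv.swap_apply_of_ne_of_ne (fun hh => hxa (σs.injective hh))
      (fun hh => hxb (σs.injective hh))
  have key : ∀ x y : Fin n, x ≠ y → ¬(x = a ∧ y = b) → ¬(x = b ∧ y = a) →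
      (τ x < τ y ↔ σs x < σs y) := by
    intro x y hxy h1 h2
    by_cases hxa : x = a
    · subst hxa
      have hyb : y ≠ b := fun hh => h1 ⟨rfl, hh⟩
      have n1 : (σs y : ℕ) ≠ (σs x : ℕ) :=
        fun hh => hxy (σs.injective (Fin.val_injective hh)).symm
      have n2 : (σs y : ℕ) ≠ (σs b : ℕ) :=
        fun hh => hyb (σs.injective (Fin.val_injective hh))
      rw [hτa, hτo y (Ne.symm hxy) hyb]
      rw [Fin.lt_def, Fin.lt_def]
      omega
    · by_cases hxb : x = b
      · subst hxb
        have hya : y ≠ a := fun hh => h2 ⟨rfl, hh⟩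
        have n1 : (σs y : ℕ) ≠ (σs x : ℕ) :=
          fun hh => hxy (σs.injective (Fin.val_injective hh)).symm
        have n2 : (σs y : ℕ) ≠ (σs a : ℕ) :=
          fun hh => hya (σs.injective (Fin.val_injective hh))
        rw [hτb, hτo y hya (Ne.symm hxy)]
        rw [Fin.lt_def, Fin.lt_def]
        omega
      · by_cases hya : y = a
        · subst hya
          have n1 : (σs x : ℕ) ≠ (σs y : ℕ) :=
            fun hh => hxy (σs.injective (Fin.val_injective hh))
          have n2 : (σs x : ℕ) ≠ (σs b : ℕ) :=
            fun hh => hxb (σs.injective (Fin.val_injective hh))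
          rw [hτo x hxa hxb, hτa]
          rw [Fin.lt_def, Fin.lt_def]
          omega
        · by_cases hyb : y = b
          · subst hyb
            have n1 : (σs x : ℕ) ≠ (σs y : ℕ) :=
              fun hh => hxy (σs.injective (Fin.val_injective hh))
            have n2 : (σs x : ℕ) ≠ (σs a : ℕ) :=
              fun hh => hxa (σs.injective (Fin.val_injective hh))
            rw [hτo x hxa hxb, hτb]
            rw [Fin.lt_def, Fin.lt_def]
            omega
          · rw [hτo x hxa hxb, hτo y hya hyb]
  have hterm : ∀ p ∈ pairs n, p ≠ (a,b) → p ≠ (b,a) → pterm P τ p = pterm P σs p := by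
    intro p hp h1 h2
    have hiff := key p.1 p.2 (mem_pairs hp).ne
      (fun ⟨u, v⟩ => h1 (Prod.ext_iff.mpr ⟨u, v⟩))
      (fun ⟨u, v⟩ => h2 (Prod.ext_iff.mpr ⟨u, v⟩))
    unfold pterm
    by_cases hc : σs p.1 < σs p.2
    · rw [if_pos hc, if_pos (hiff.mpr hc)]
    · rw [if_neg hc, if_neg (fun hh => hc (hiff.mp hh))]
  have hsab : σs a < σs b := by rw [Fin.lt_def]; omega
  have hτba : τ b < τ a := by rw [hτa, hτb]; exact hsab
  rcases lt_or_gt_of_ne hab with hlt | hlt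
  · have hq : (a, b) ∈ pairs n := Finset.mem_filter.mpr ⟨Finset.mem_univ _, hlt⟩
    have hsum : L P τ - L P σs = pterm P τ (a,b) - pterm P σs (a,b) := by
      rw [L_eq hP, L_eq hP, ← Finset.sum_sub_distrib]
      rw [Finset.sum_eq_single (a,b)]
      · intro p hp hpn
        have h2 : p ≠ (b, a) := by
          intro hh
          rw [hh] at hp
          exact absurd (mem_pairs hp) (not_lt_of_gt hlt)
        rw [hterm p hp hpn h2, sub_self]
      · intro hq'; exact absurd hq hq'
    have ht1 : pterm P τ (a,b) = pp P a b := by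
      unfold pterm; rw [if_neg (not_lt_of_gt hτba)]
    have ht2 : pterm P σs (a,b) = 1 - pp P a b := by
      unfold pterm; rw [if_pos hsab]
    have hmm := hmed τ
    rw [ht1, ht2] at hsum
    linarith
  · have hq : (b, a) ∈ pairs n := Finset.mem_filter.mpr ⟨Finset.mem_univ _, hlt⟩
    have hsum : L P τ - L P σs = pterm P τ (b,a) - pterm P σs (b,a) := by
      rw [L_eq hP, L_eq hP, ← Finset.sum_sub_distrib]
      rw [Finset.sum_eq_single (b,a)]
      · intro p hp hpn
        have h1 : p ≠ (a, b) := by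
          intro hh
          rw [hh] at hp
          exact absurd (mem_pairs hp) (not_lt_of_gt hlt)
        rw [hterm p hp h1 hpn, sub_self]
      · intro hq'; exact absurd hq hq'
    have ht1 : pterm P τ (b,a) = 1 - pp P b a := by
      unfold pterm; rw [if_pos hτba]
    have ht2 : pterm P σs (b,a) = pp P b a := by
      unfold pterm; rw [if_neg (not_lt_of_gt hsab)]
    have hmm := hmed τ
    rw [ht1, ht2] at hsum
    have hcompl := pp_compl hP hab
    linarith

lemma median_ge (hP : IsProb P) (hT : StochTrans P) (hmed : IsMedian P σs) :
    ∀ g : ℕ, ∀ a b : Fin n, (σs b : ℕ) = (σs a : ℕ) + g + 1 → 1/2 ≤ pp P a b := by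
  intro g
  induction g with
  | zero => intro a b h; exact median_adj hP hmed (by omega)
  | succ m ih =>
    intro a b h
    have hlt : (σs a : ℕ) + m + 1 < n := by have := (σs b).isLt; omega
    set c := σs.symm ⟨(σs a : ℕ) + m + 1, hlt⟩ with hc
    have hsc : (σs c : ℕ) = (σs a : ℕ) + m + 1 := by simp [hc]
    exact hT a c b (ih a c (by omega)) (median_adj hP hmed (by omega))

lemma median_agrees (hP : IsProb P) (hT : StrictStochTrans P) (hmed : IsMedian P σs)
    {a b : Fin n} (hab : σs a < σs b) : 1/2 < pp P a b := by
  have hne : a ≠ b := by intro hh; rw [hh] at hab; exact lt_irrefl _ hab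
  have hv : (σs a : ℕ) < (σs b : ℕ) := hab
  have hge : 1/2 ≤ pp P a b :=
    median_ge hP hT.1 hmed ((σs b : ℕ) - (σs a : ℕ) - 1) a b (by omega)
  rcases lt_or_gt_of_ne hne with hlt | hlt
  · exact lt_of_le_of_ne hge (Ne.symm (hT.2 a b hlt))
  · have h2 : pp P b a ≠ 1/2 := hT.2 b a hlt
    have hcompl := pp_compl hP hne
    have hne2 : pp P a b ≠ 1/2 := fun hh => h2 (by linarith)
    exact lt_of_le_of_ne hge (Ne.symm hne2)

end Median
section Excess
variable {n : ℕ} {P : Equiv.Perm (Fin n) → ℝ} {σs : Equiv.Perm (Fin n)}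

lemma excess_bounds (hP : IsProb P) (hT : StrictStochTrans P) (hmed : IsMedian P σs)
    {H : ℝ} (hH : ∀ i j : Fin n, i < j → H ≤ |pp P i j - 1/2|) (σ : Equiv.Perm (Fin n)) :
    2*H*dtau σs σ ≤ L P σ - L P σs ∧ L P σ - L P σs ≤ dtau σs σ := by
  have hper : ∀ p ∈ pairs n,
      (2*H*(if (σs p.1 < σs p.2) ↔ (σ p.1 < σ p.2) then (0:ℝ) else 1)
        ≤ pterm P σ p - pterm P σs p)
      ∧ pterm P σ p - pterm P σs p
        ≤ (if (σs p.1 < σs p.2) ↔ (σ p.1 < σ p.2) then (0:ℝ) else 1) := by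
    intro p hp
    have hlt := mem_pairs hp
    have hne := hlt.ne
    have hq0 : 0 ≤ pp P p.1 p.2 := pp_nonneg hP _ _
    have hq1 : pp P p.1 p.2 ≤ 1 := pp_le_one hP hne
    have hHq : H ≤ |pp P p.1 p.2 - 1/2| := hH p.1 p.2 hlt
    have hσsne : σs p.1 ≠ σs p.2 := fun hh => hne (σs.injective hh)
    have hσne : σ p.1 ≠ σ p.2 := fun hh => hne (σ.injective hh)
    have hiff : (σs p.1 < σs p.2) ↔ 1/2 < pp P p.1 p.2 := by
      constructor
      · exact fun hh => median_agrees hP hT hmed hh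
      · intro hh
        rcases lt_or_gt_of_ne hσsne with hs | hs
        · exact hs
        · have := median_agrees hP hT hmed hs
          have hcompl := pp_compl hP hne
          linarith
    unfold pterm
    rcases lt_or_gt_of_ne hσsne with hs | hs <;> rcases lt_or_gt_of_ne hσne with ho | ho
    · rw [if_pos (iff_of_true hs ho), if_pos ho, if_pos hs]
      constructor <;> linarith
    · have hqh : 1/2 < pp P p.1 p.2 := hiff.mp hs
      rw [abs_of_nonneg (by linarith)] at hHq
      rw [if_neg (fun hh => absurd (hh.mp hs) (not_lt_of_gt ho)),
        if_neg (not_lt_of_gt ho), if_pos hs]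
      constructor <;> linarith
    · have hqh : ¬ (1/2 < pp P p.1 p.2) := fun hh => absurd (hiff.mpr hh) (not_lt_of_gt hs)
      rw [abs_of_nonpos (by push_neg at hqh; linarith)] at hHq
      rw [if_neg (fun hh => absurd (hh.mpr ho) (not_lt_of_gt hs)),
        if_pos ho, if_neg (not_lt_of_gt hs)]
      push_neg at hqh
      constructor <;> linarith
    · rw [if_pos (iff_of_false (not_lt_of_gt hs) (not_lt_of_gt ho)),
        if_neg (not_lt_of_gt ho), if_neg (not_lt_of_gt hs)]
      constructor <;> linarith
  constructor
  · rw [L_eq hP, L_eq hP, ← Finset.sum_sub_distrib, dtau_eq, Finset.mul_sum]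
    exact Finset.sum_le_sum fun p hp => (hper p hp).1
  · rw [L_eq hP, L_eq hP, ← Finset.sum_sub_distrib, dtau_eq]
    exact Finset.sum_le_sum fun p hp => (hper p hp).2

end Excess
section Integr
variable {n : ℕ} {X : Type*} [MeasurableSpace X]

lemma measurable_Ls (P : X → Equiv.Perm (Fin n) → ℝ) (hmeas : ∀ τ, Measurable fun x => P x τ)
    (s : X → Equiv.Perm (Fin n)) (hs : Measurable s) :
    Measurable (fun x => L (P x) (s x)) := by
  have heq : (fun x => L (P x) (s x)) =
      fun x => ∑ σ' : Equiv.Perm (Fin n), (if s x = σ' then L (P x) σ' else 0) := by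
    funext x
    rw [Finset.sum_ite_eq]
    simp
  rw [heq]
  refine Finset.measurable_sum _ fun σ' _ => ?_
  have hset : MeasurableSet {x | s x = σ'} := by
    have : {x | s x = σ'} = s ⁻¹' {σ'} := rfl
    rw [this]
    exact hs MeasurableSpace.measurableSet_top
  refine Measurable.ite hset ?_ measurable_const
  unfold L
  exact Finset.measurable_sum _ fun τ _ => (hmeas τ).mul_const _

lemma integrable_Ls (μ : Measure X) [IsProbabilityMeasure μ] (P : X → Equiv.Perm (Fin n) → ℝ)
    (hP : ∀ x, IsProb (P x)) (hmeas : ∀ τ, Measurable fun x => P x τ)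
    (s : X → Equiv.Perm (Fin n)) (hs : Measurable s) :
    Integrable (fun x => L (P x) (s x)) μ := by
  refine Integrable.mono' (integrable_const ((pairs n).card : ℝ))
    (measurable_Ls P hmeas s hs).aestronglyMeasurable
    (Filter.Eventually.of_forall fun x => ?_)
  rw [Real.norm_eq_abs, abs_of_nonneg (L_nonneg (hP x) _)]
  exact L_le_card (hP x) _

end Integr

theorem stmt_18' {n : ℕ} {X : Type*} [MeasurableSpace X]
    (μ : Measure X) [IsProbabilityMeasure μ]
    (P : X → Equiv.Perm (Fin n) → ℝ)
    (hP : ∀ x, IsProb (P x)) (hmeas : ∀ τ, Measurable fun x => P x τ)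
    (H : ℝ) (hHpos : 0 < H)
    (hH : ∀ x, ∀ i j : Fin n, i < j → H ≤ |pp (P x) i j - 1/2|)
    (hTx : ∀ x, StrictStochTrans (P x))
    (sstar : X → Equiv.Perm (Fin n)) (hsstarm : Measurable sstar)
    (hmed : ∀ x, IsMedian (P x) (sstar x))
    (B : ℕ) (hB : 0 < B)
    (s : Fin B → X → Equiv.Perm (Fin n)) (hs : ∀ b, Measurable (s b))
    (sbar : X → Equiv.Perm (Fin n)) (hsbar : Measurable sbar)
    (hagg : ∀ x, ∀ τ : Equiv.Perm (Fin n),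
      ∑ b, dtau (sbar x) (s b x) ≤ ∑ b, dtau τ (s b x)) :
    Risk μ P sbar - Risk μ P sstar ≤
      (1 / ((B : ℝ) * H)) * ∑ b, (Risk μ P (s b) - Risk μ P sstar) := by
  classical
  have hIstar : Integrable (fun x => L (P x) (sstar x)) μ :=
    integrable_Ls μ P hP hmeas sstar hsstarm
  have hIbar : Integrable (fun x => L (P x) (sbar x)) μ :=
    integrable_Ls μ P hP hmeas sbar hsbar
  have hIb : ∀ b, Integrable (fun x => L (P x) (s b x)) μ := fun b =>
    integrable_Ls μ P hP hmeas (s b) (hs b)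
  have hBpos : (0:ℝ) < B := Nat.cast_pos.mpr hB
  have key : ∀ x, L (P x) (sbar x) - L (P x) (sstar x)
      ≤ (1/((B:ℝ)*H)) * ∑ b, (L (P x) (s b x) - L (P x) (sstar x)) := by
    intro x
    have hup := (excess_bounds (hP x) (hTx x) (hmed x) (hH x) (sbar x)).2
    have hlow : ∀ b : Fin B,
        2*H*dtau (sstar x) (s b x) ≤ L (P x) (s b x) - L (P x) (sstar x) :=
      fun b => (excess_bounds (hP x) (hTx x) (hmed x) (hH x) (s b x)).1
    have htri : (B:ℝ) * dtau (sstar x) (sbar x) ≤ 2 * ∑ b, dtau (sstar x) (s b x) := by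
      have h2 : (B:ℝ) * dtau (sstar x) (sbar x)
          = ∑ _b : Fin B, dtau (sstar x) (sbar x) := by
        rw [Finset.sum_const, Finset.card_univ, Fintype.card_fin, nsmul_eq_mul]
      rw [h2]
      calc ∑ _b : Fin B, dtau (sstar x) (sbar x)
          ≤ ∑ b, (dtau (sstar x) (s b x) + dtau (s b x) (sbar x)) :=
            Finset.sum_le_sum fun b _ => dtau_triangle _ _ _
        _ = ∑ b, dtau (sstar x) (s b x) + ∑ b, dtau (sbar x) (s b x) := by
            rw [Finset.sum_add_distrib]
            congr 1
            exact Finset.sum_congr rfl fun b _ => dtau_symm _ _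
        _ ≤ ∑ b, dtau (sstar x) (s b x) + ∑ b, dtau (sstar x) (s b x) := by
            have := hagg x (sstar x); linarith
        _ = 2 * ∑ b, dtau (sstar x) (s b x) := by ring
    have hsum : 2*H*∑ b, dtau (sstar x) (s b x)
        ≤ ∑ b, (L (P x) (s b x) - L (P x) (sstar x)) := by
      rw [Finset.mul_sum]
      exact Finset.sum_le_sum fun b _ => hlow b
    rw [one_div, inv_mul_eq_div, le_div_iff₀ (mul_pos hBpos hHpos)]
    have e1 : (L (P x) (sbar x) - L (P x) (sstar x)) * ((B:ℝ)*H)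
        ≤ dtau (sstar x) (sbar x) * ((B:ℝ)*H) :=
      mul_le_mul_of_nonneg_right hup (le_of_lt (mul_pos hBpos hHpos))
    have e2 : dtau (sstar x) (sbar x) * ((B:ℝ)*H)
        = H * ((B:ℝ) * dtau (sstar x) (sbar x)) := by ring
    have e3 : H * ((B:ℝ) * dtau (sstar x) (sbar x))
        ≤ H * (2 * ∑ b, dtau (sstar x) (s b x)) :=
      mul_le_mul_of_nonneg_left htri hHpos.le
    have e4 : H * (2 * ∑ b, dtau (sstar x) (s b x))
        = 2*H*∑ b, dtau (sstar x) (s b x) := by ring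
    linarith
  have hGb : ∀ b : Fin B, Integrable (fun x => L (P x) (s b x) - L (P x) (sstar x)) μ :=
    fun b => (hIb b).sub hIstar
  have hGint : Integrable (fun x => ∑ b, (L (P x) (s b x) - L (P x) (sstar x))) μ :=
    integrable_finset_sum _ (fun b _ => hGb b)
  have hmono : ∫ x, (L (P x) (sbar x) - L (P x) (sstar x)) ∂μ
      ≤ ∫ x, (1/((B:ℝ)*H)) * ∑ b, (L (P x) (s b x) - L (P x) (sstar x)) ∂μ :=
    integral_mono (hIbar.sub hIstar) (hGint.const_mul _) key
  have hL : Risk μ P sbar - Risk μ P sstar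
      = ∫ x, (L (P x) (sbar x) - L (P x) (sstar x)) ∂μ :=
    (integral_sub hIbar hIstar).symm
  have hR : ∫ x, (1/((B:ℝ)*H)) * ∑ b, (L (P x) (s b x) - L (P x) (sstar x)) ∂μ
      = (1 / ((B : ℝ) * H)) * ∑ b, (Risk μ P (s b) - Risk μ P sstar) := by
    rw [integral_const_mul]
    congr 1
    rw [integral_finset_sum _ (fun b _ => hGb b)]
    exact Finset.sum_congr rfl fun b _ => integral_sub (hIb b) hIstar
  rw [hL, ← hR]
  exact hmono
theorem stmt_18 {n : ℕ} {X : Type*} [MeasurableSpace X]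
    (μ : Measure X) [IsProbabilityMeasure μ]
    (P : X → Equiv.Perm (Fin n) → ℝ)
    (hP : ∀ x, IsProb (P x)) (hmeas : ∀ τ, Measurable fun x => P x τ)
    (H : ℝ) (hHpos : 0 < H)
    (hH : ∀ x, ∀ i j : Fin n, i < j → H ≤ |pp (P x) i j - 1/2|)
    (hTx : ∀ x, StrictStochTrans (P x))
    (sstar : X → Equiv.Perm (Fin n)) (hsstarm : Measurable sstar)
    (hmed : ∀ x, IsMedian (P x) (sstar x))
    (B : ℕ) (hB : 0 < B)
    (s : Fin B → X → Equiv.Perm (Fin n)) (hs : ∀ b, Measurable (s b))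
    (sbar : X → Equiv.Perm (Fin n)) (hsbar : Measurable sbar)
    (hagg : ∀ x, ∀ τ : Equiv.Perm (Fin n),
      ∑ b, dtau (sbar x) (s b x) ≤ ∑ b, dtau τ (s b x)) :
    Risk μ P sbar - Risk μ P sstar ≤
      (1 / ((B : ℝ) * H)) * ∑ b, (Risk μ P (s b) - Risk μ P sstar) := by
  exact stmt_18' μ P hP hmeas H hHpos hH hTx sstar hsstarm hmed B hB s hs sbar hsbar hagg
end
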